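/- Cut elimination for separability: every derivable judgment Σ; Γ ⊢ τ : m has a derivation in which the conversion rule (from Σ; Γ ⊢ τ : m with m ≥ n conclude Σ; Γ ⊢ τ : n) is applied only to conclusions of the axiom rule for variables; equivalently, the system where the conversion rule is replaced by the rule '(α : m) ∈ Γ and m ≥ n implies Σ; Γ ⊢ α : n' derives exactly the same judgments. -/
import Mathlib


/-- Separability modes. -/
inductive Mode : Type
  | ind | sep | deepsep
deriving DecidableEq

def Mode.toNat : Mode → ℕ
  | .ind => 0
  | .sep => 1
  | .deepsep => 2

instance : LinearOrder Mode :=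
  LinearOrder.lift' Mode.toNat (fun a b => by cases a <;> cases b <;> simp [Mode.toNat])

/-- Mode composition: Ind ∘ m = Ind, Sep ∘ m = m, Deepsep ∘ m = Deepsep. -/
def Mode.comp : Mode → Mode → Mode
  | .ind, _ => .ind
  | .sep, m => m
  | .deepsep, _ => .deepsep

/-- Constraint-free type expressions: variables, builtins, constructor
applications, arrows, products, universals and existentials. -/
inductive Ty : Type
  | var : ℕ → Ty
  | tfloat : Ty
  | tint : Ty
  | tbool : Ty
  | constr : ℕ → (n : ℕ) → (Fin n → Ty) → Ty
  | arrow : Ty → Ty → Ty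
  | prod : (n : ℕ) → (Fin n → Ty) → Ty
  | all : ℕ → Ty → Ty
  | ex : ℕ → Ty → Ty

/-- A mode signature assigns a mode to each parameter of each type constructor. -/
abbrev Sig := ℕ → ℕ → Mode

/-- A context assigns a mode to each type variable. -/
abbrev Ctx := ℕ → Mode

/-- Context update. -/
def Ctx.upd (Γ : Ctx) (a : ℕ) (m : Mode) : Ctx :=
  fun x => if x = a then m else Γ x

/-- The separability inference system with the variable axiom and the
conversion rule. -/
inductive Derives (Sg : Sig) : Ctx → Ty → Mode → Prop
  | var {Γ a m} : Γ a = m → Derives Sg Γ (.var a) m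
  | conv {Γ τ m n} : Derives Sg Γ τ m → n ≤ m → Derives Sg Γ τ n
  | tfloat {Γ m} : Derives Sg Γ .tfloat m
  | tint {Γ m} : Derives Sg Γ .tint m
  | tbool {Γ m} : Derives Sg Γ .tbool m
  | constr {Γ t n f m} :
      (∀ i : Fin n, Derives Sg Γ (f i) (Mode.comp m (Sg t i))) →
      Derives Sg Γ (.constr t n f) m
  | arrow {Γ τ₁ τ₂ m} :
      Derives Sg Γ τ₁ (Mode.comp m .ind) → Derives Sg Γ τ₂ (Mode.comp m .ind) →
      Derives Sg Γ (.arrow τ₁ τ₂) m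
  | prod {Γ n f m} :
      (∀ i : Fin n, Derives Sg Γ (f i) (Mode.comp m .ind)) →
      Derives Sg Γ (.prod n f) m
  | all {Γ a τ m} (n : Mode) : Derives Sg (Γ.upd a n) τ m → Derives Sg Γ (.all a τ) m
  | ex {Γ a τ m} : Derives Sg (Γ.upd a .ind) τ m → Derives Sg Γ (.ex a τ) m

/-- The same system where the conversion rule is removed and the
variable axiom is replaced by the primitive rule
`(α : m) ∈ Γ` and `m ≥ n` implies `Σ; Γ ⊢ α : n`. -/
inductive Derives' (Sg : Sig) : Ctx → Ty → Mode → Prop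
  | var {Γ a m n} : Γ a = m → n ≤ m → Derives' Sg Γ (.var a) n
  | tfloat {Γ m} : Derives' Sg Γ .tfloat m
  | tint {Γ m} : Derives' Sg Γ .tint m
  | tbool {Γ m} : Derives' Sg Γ .tbool m
  | constr {Γ t n f m} :
      (∀ i : Fin n, Derives' Sg Γ (f i) (Mode.comp m (Sg t i))) →
      Derives' Sg Γ (.constr t n f) m
  | arrow {Γ τ₁ τ₂ m} :
      Derives' Sg Γ τ₁ (Mode.comp m .ind) → Derives' Sg Γ τ₂ (Mode.comp m .ind) →
      Derives' Sg Γ (.arrow τ₁ τ₂) m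
  | prod {Γ n f m} :
      (∀ i : Fin n, Derives' Sg Γ (f i) (Mode.comp m .ind)) →
      Derives' Sg Γ (.prod n f) m
  | all {Γ a τ m} (n : Mode) : Derives' Sg (Γ.upd a n) τ m → Derives' Sg Γ (.all a τ) m
  | ex {Γ a τ m} : Derives' Sg (Γ.upd a .ind) τ m → Derives' Sg Γ (.ex a τ) m


lemma Mode.comp_mono {n m : Mode} (h : n ≤ m) (k : Mode) :
    Mode.comp n k ≤ Mode.comp m k := by
  cases n <;> cases m <;> cases k <;> simp_all [Mode.comp] <;>
    first
      | rfl
      | exact h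
      | (exact absurd h (by decide))
      | decide

lemma Derives'.mono {Sg : Sig} {Γ : Ctx} {τ : Ty} {m : Mode}
    (h : Derives' Sg Γ τ m) : ∀ n ≤ m, Derives' Sg Γ τ n := by
  induction h with
  | var h hle => exact fun k hk => .var h (hk.trans hle)
  | tfloat => exact fun _ _ => .tfloat
  | tint => exact fun _ _ => .tint
  | tbool => exact fun _ _ => .tbool
  | constr h ih =>
      exact fun k hk => .constr fun i => ih i _ (Mode.comp_mono hk _)
  | arrow h1 h2 ih1 ih2 =>
      exact fun k hk => .arrow (ih1 _ (Mode.comp_mono hk _)) (ih2 _ (Mode.comp_mono hk _))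
  | prod h ih => exact fun k hk => .prod fun i => ih i _ (Mode.comp_mono hk _)
  | all n h ih => exact fun k hk => .all n (ih _ hk)
  | ex h ih => exact fun k hk => .ex (ih _ hk)

/-- Cut elimination: the system with the conversion rule and the system
where conversion is fused into the variable axiom derive exactly the
same judgments. -/
theorem cut_elimination (Sg : Sig) (Γ : Ctx) (τ : Ty) (m : Mode) :
    Derives Sg Γ τ m ↔ Derives' Sg Γ τ m := by
  constructor
  · intro h
    induction h with
    | var h => exact .var h le_rfl
    | conv h hle ih => exact ih.mono _ hle
    | tfloat => exact .tfloat
    | tint => exact .tint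
    | tbool => exact .tbool
    | constr h ih => exact .constr ih
    | arrow h1 h2 ih1 ih2 => exact .arrow ih1 ih2
    | prod h ih => exact .prod ih
    | all n h ih => exact .all n ih
    | ex h ih => exact .ex ih
  · intro h
    induction h with
    | var h hle => exact .conv (.var h) hle
    | tfloat => exact .tfloat
    | tint => exact .tint
    | tbool => exact .tbool
    | constr h ih => exact .constr ih
    | arrow h1 h2 ih1 ih2 => exact .arrow ih1 ih2
    | prod h ih => exact .prod ih
    | all n h ih => exact .all n ih
    | ex h ih => exact .ex ih
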